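/- Let k ≥ 1 and J ≥ 2 be integers, and let A be an orthogonal transformation of Euclidean space ℝ^k with A^J = Id and A ≠ Id. Then there exists a unit vector v ∈ ℝ^k with ‖A·v − v‖ ≥ 2·sin(π/J). -/

import Mathlib

/-! Let `c` be the minimum of `⟪A x, x⟫` on the unit sphere, attained at `v`. Then `v` is an
eigenvector of the self-adjoint operator `A + A⁻¹` with eigenvalue `2c`, and `c < 1` since `A ≠ 1`.
Writing `c = cos θ` with `0 < θ ≤ π`, the relation `A² v = 2c A v - v` gives the Chebyshev recurrence
`⟪Aⁿ v, v⟫ = cos (nθ)`, so `A^J = 1` forces `cos (Jθ) = 1` and `θ ≥ 2π/J`. Hence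
`‖A v - v‖² = 2 - 2 cos θ ≥ 2 - 2 cos (2π/J) = 4 sin² (π/J)`. -/

open Real Metric
open scoped RealInnerProductSpace

namespace LinearIsometryEquiv

variable {E : Type*} [NormedAddCommGroup E] [InnerProductSpace ℝ E]

theorem norm_apply_sub_self_sq (A : E ≃ₗᵢ[ℝ] E) (v : E) :
    ‖A v - v‖ ^ 2 = 2 * (‖v‖ ^ 2 - ⟪A v, v⟫) := by
  rw [norm_sub_sq_real, A.norm_map]
  ring

theorem pow_succ_apply (A : E ≃ₗᵢ[ℝ] E) (n : ℕ) (v : E) : (A ^ (n + 1)) v = (A ^ n) (A v) := by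
  rw [pow_succ]; rfl

theorem inner_pow_apply_self_eq_cos (A : E ≃ₗᵢ[ℝ] E) {v : E} {θ : ℝ} (hv : ‖v‖ = 1)
    (h₁ : ⟪A v, v⟫ = cos θ) (h₂ : A (A v) = (2 * cos θ) • A v - v) (n : ℕ) :
    ⟪(A ^ n) v, v⟫ = cos (n * θ) := by
  suffices ⟪(A ^ n) v, v⟫ = cos (n * θ) ∧ ⟪(A ^ (n + 1)) v, v⟫ = cos ((n + 1 : ℕ) * θ) from
    this.1
  induction n with
  | zero => simpa [real_inner_self_eq_norm_sq, hv] using h₁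
  | succ n ih =>
    refine ⟨ih.2, ?_⟩
    have hrec : (A ^ (n + 1 + 1)) v = (2 * cos θ) • (A ^ (n + 1)) v - (A ^ n) v := by
      rw [pow_succ_apply, pow_succ_apply, h₂, map_sub, map_smul, ← pow_succ_apply]
    have htrig : cos ((n + 1 + 1 : ℕ) * θ) = 2 * cos θ * cos ((n + 1 : ℕ) * θ) - cos (n * θ) := by
      have hadd := cos_add ((n + 1 : ℕ) * θ) θ
      have hsub := cos_sub ((n + 1 : ℕ) * θ) θ
      push_cast at hadd hsub ⊢
      rw [show ((n : ℝ) + 1 + 1) * θ = (n + 1) * θ + θ by ring,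
        show (n : ℝ) * θ = (n + 1) * θ - θ by ring, hadd, hsub]
      ring
    rw [hrec, inner_sub_left, real_inner_smul_left, ih.1, ih.2, htrig]

theorem isSelfAdjoint_add_symm [CompleteSpace E] (A : E ≃ₗᵢ[ℝ] E) :
    IsSelfAdjoint ((A : E →L[ℝ] E) + (A.symm : E →L[ℝ] E)) := by
  rw [IsSelfAdjoint, star_add, ContinuousLinearMap.star_eq_adjoint,
    ContinuousLinearMap.star_eq_adjoint, adjoint_eq_symm, adjoint_eq_symm A.symm,
    symm_symm, add_comm]

theorem apply_apply_eq_of_isMinOn [CompleteSpace E] (A : E ≃ₗᵢ[ℝ] E) {v : E} (hv : ‖v‖ = 1)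
    (hmin : IsMinOn (fun x ↦ ⟪A x, x⟫) (sphere 0 1) v) :
    A (A v) = (2 * ⟪A v, v⟫) • A v - v := by
  set T : E →L[ℝ] E := (A : E →L[ℝ] E) + (A.symm : E →L[ℝ] E)
  have hT : ∀ x, T.reApplyInnerSelf x = 2 * ⟪A x, x⟫ := fun x ↦ by
    have : ⟪A.symm x, x⟫ = ⟪A x, x⟫ := by
      rw [← A.inner_map_map, apply_symm_apply, real_inner_comm]
    simp [T, ContinuousLinearMap.reApplyInnerSelf, inner_add_left, this, two_mul]
  have hextr : IsLocalExtrOn T.reApplyInnerSelf (sphere 0 ‖v‖) v := by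
    refine Or.inl (IsMinOn.localize fun x hx ↦ ?_)
    rw [hv] at hx
    simpa only [Set.mem_ofPred_eq, hT] using mul_le_mul_of_nonneg_left (hmin hx) zero_le_two
  have heig := A.isSelfAdjoint_add_symm.eq_smul_self_of_isLocalExtrOn_real hextr
  rw [ContinuousLinearMap.rayleighQuotient, hT, hv, one_pow, div_one] at heig
  have heig' : A v + A.symm v = (2 * ⟪A v, v⟫) • v := heig
  rw [eq_sub_iff_add_eq]
  simpa only [map_add, apply_symm_apply, map_smul] using congrArg A heig'

theorem exists_inner_apply_self_lt_one (A : E ≃ₗᵢ[ℝ] E) (hA : A ≠ 1) :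
    ∃ u : E, ‖u‖ = 1 ∧ ⟪A u, u⟫ < 1 := by
  obtain ⟨x, hx⟩ : ∃ x, A x ≠ x := by
    by_contra! h
    exact hA (ext h)
  have hx₀ : x ≠ 0 := by
    rintro rfl
    exact hx (map_zero A)
  have hunit : ‖‖x‖⁻¹ • x‖ = 1 := by
    rw [norm_smul, norm_inv, norm_norm, inv_mul_cancel₀ (norm_ne_zero_iff.mpr hx₀)]
  refine ⟨‖x‖⁻¹ • x, hunit, ?_⟩
  have hpos : 0 < ‖A (‖x‖⁻¹ • x) - ‖x‖⁻¹ • x‖ := by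
    rw [map_smul, ← smul_sub, norm_pos_iff, smul_ne_zero_iff]
    exact ⟨by simpa using hx₀, sub_ne_zero.mpr hx⟩
  have hsq := A.norm_apply_sub_self_sq (‖x‖⁻¹ • x)
  rw [hunit] at hsq
  nlinarith

theorem exists_isMinOn_inner_apply_self [FiniteDimensional ℝ E] (A : E ≃ₗᵢ[ℝ] E) (hA : A ≠ 1) :
    ∃ v, ‖v‖ = 1 ∧ ⟪A v, v⟫ < 1 ∧ IsMinOn (fun x ↦ ⟪A x, x⟫) (sphere 0 1) v := by
  obtain ⟨u, hu, hu₁⟩ := A.exists_inner_apply_self_lt_one hA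
  have hu' : u ∈ sphere (0 : E) 1 := mem_sphere_zero_iff_norm.mpr hu
  obtain ⟨v, hv, hmin⟩ :=
    (isCompact_sphere (0 : E) 1).exists_isMinOn ⟨u, hu'⟩ (f := fun x ↦ ⟪A x, x⟫) (by fun_prop)
  exact ⟨v, mem_sphere_zero_iff_norm.mp hv, (hmin hu').trans_lt hu₁, hmin⟩

theorem two_mul_sin_le_norm_apply_sub (A : E ≃ₗᵢ[ℝ] E) {v : E} (hv : ‖v‖ = 1) {x : ℝ}
    (h : ⟪A v, v⟫ ≤ cos (2 * x)) : 2 * sin x ≤ ‖A v - v‖ := by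
  refine le_of_sq_le_sq ?_ (norm_nonneg _)
  rw [A.norm_apply_sub_self_sq, hv, cos_two_mul', cos_sq'] at *
  linarith

end LinearIsometryEquiv

theorem two_pi_div_le_of_cos_nat_mul_eq_one {J : ℕ} {θ : ℝ} (hθ : 0 < θ) (h : cos (J * θ) = 1) :
    2 * π / J ≤ θ := by
  rcases J.eq_zero_or_pos with rfl | hJ
  · simpa using hθ.le
  obtain ⟨m, hm⟩ := (cos_eq_one_iff _).mp h
  have hJ' : (0 : ℝ) < J := by exact_mod_cast hJ
  have hm₀ : (0 : ℝ) < m := by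
    by_contra! hm₀
    nlinarith [pi_pos]
  have hm₁ : (1 : ℝ) ≤ m := by
    have := Int.cast_pos.mp hm₀
    exact_mod_cast (show (1 : ℤ) ≤ m by omega)
  rw [div_le_iff₀ hJ']
  nlinarith [pi_pos]

theorem stmt_1_general (k J : ℕ)
    (A : EuclideanSpace ℝ (Fin k) ≃ₗᵢ[ℝ] EuclideanSpace ℝ (Fin k))
    (hAJ : A ^ J = 1) (hA : A ≠ 1) :
    ∃ v : EuclideanSpace ℝ (Fin k), ‖v‖ = 1 ∧ 2 * Real.sin (Real.pi / J) ≤ ‖A v - v‖ := by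
  obtain ⟨v, hv, hlt, hmin⟩ := A.exists_isMinOn_inner_apply_self hA
  set θ := arccos ⟪A v, v⟫
  have hcos : ⟪A v, v⟫ = cos θ :=
    (cos_arccos (neg_one_le_real_inner_of_norm_eq_one (by rw [A.norm_map, hv]) hv) hlt.le).symm
  have hJθ : cos (J * θ) = 1 := by
    rw [← A.inner_pow_apply_self_eq_cos hv hcos (hcos ▸ A.apply_apply_eq_of_isMinOn hv hmin), hAJ,
      LinearIsometryEquiv.coe_one, id_eq, real_inner_self_eq_norm_sq, hv, one_pow]
  refine ⟨v, hv, A.two_mul_sin_le_norm_apply_sub hv ?_⟩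
  rw [hcos, ← mul_div_assoc]
  exact cos_le_cos_of_nonneg_of_le_pi (by positivity) (arccos_le_pi _)
    (two_pi_div_le_of_cos_nat_mul_eq_one (arccos_pos.mpr hlt) hJθ)

/-- Let `k ≥ 1`, `J ≥ 2` be integers and `A` an orthogonal transformation
(linear isometry equivalence) of `ℝ^k` with `A^J = Id` and `A ≠ Id`. Then there exists a
unit vector `v` with `‖A v - v‖ ≥ 2 sin (π/J)`. -/
theorem stmt_1 (k J : ℕ) (hk : 1 ≤ k) (hJ : 2 ≤ J)
    (A : EuclideanSpace ℝ (Fin k) ≃ₗᵢ[ℝ] EuclideanSpace ℝ (Fin k))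
    (hAJ : A ^ J = 1) (hA : A ≠ 1) :
    ∃ v : EuclideanSpace ℝ (Fin k), ‖v‖ = 1 ∧ 2 * Real.sin (Real.pi / J) ≤ ‖A v - v‖ :=
  stmt_1_general k J A hAJ hA
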